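/- arXiv:1310.7673 — 6 statements merged into one kernel-verified Lean document; each statement's English description precedes it below -/
import Mathlib

section
/- Let k1, k3, k5, k7, C1, E be positive real numbers and set K1 = C1·k1·k7 − k3·k5·E. If K1 > 0, then the triple (M̄g, M̄s, D̄f) = (k1²·C1/K1, k1·k3·E/K1, E/k1) has all three components positive and is a zero of the reaction vector field f, i.e. f(M̄g, M̄s, D̄f) = (0,0,0). -/
/-!
With `Df = E / k1` the nucleation term `k1·Df` equals `E`, and the net switching flux
`k7·Df·Mg − k5·Df·Ms` equals `E·(C1·k1·k7 − k3·k5·E) / K1 = E`; these two facts make the first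
two components vanish. The third reduces to `k3·Df·Mg = C1·Ms`, which holds because both sides
equal `k1·k3·C1·E / K1`.
-/

lemma switching_flux_eq_extinction {k1 k3 k5 k7 C1 E K1 : ℝ} (hk1 : k1 ≠ 0)
    (hK1 : K1 = C1 * k1 * k7 - k3 * k5 * E) (hK1ne : K1 ≠ 0) :
    k7 * (E / k1) * (k1 ^ 2 * C1 / K1) - k5 * (E / k1) * (k1 * k3 * E / K1) = E := by
  field_simp
  rw [hK1]
  ring

lemma growth_eq_shrinkage {k1 k3 C1 E K1 : ℝ} (hk1 : k1 ≠ 0) :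
    k3 * (E / k1) * (k1 ^ 2 * C1 / K1) = C1 * (k1 * k3 * E / K1) := by
  field_simp

theorem microtubule_steady_state_general
    (k1 k3 k5 k7 C1 E K1 : ℝ)
    (hk1 : 0 < k1) (hk3 : 0 < k3)
    (hC1 : 0 < C1) (hE : 0 < E)
    (hK1 : K1 = C1 * k1 * k7 - k3 * k5 * E) (hK1pos : 0 < K1) :
    (0 < k1 ^ 2 * C1 / K1 ∧ 0 < k1 * k3 * E / K1 ∧ 0 < E / k1) ∧
    (-k7 * (E / k1) * (k1 ^ 2 * C1 / K1) + k5 * (E / k1) * (k1 * k3 * E / K1)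
        + k1 * (E / k1) = 0 ∧
     k7 * (E / k1) * (k1 ^ 2 * C1 / K1) - k5 * (E / k1) * (k1 * k3 * E / K1)
        - E = 0 ∧
     -k3 * (E / k1) * (k1 ^ 2 * C1 / K1) + C1 * (k1 * k3 * E / K1)
        - k1 * (E / k1) + E = 0) := by
  have hflux := switching_flux_eq_extinction hk1.ne' hK1 hK1pos.ne'
  have hnucl : k1 * (E / k1) = E := mul_div_cancel₀ E hk1.ne'
  have hgrowth := growth_eq_shrinkage (k3 := k3) (C1 := C1) (E := E) (K1 := K1) hk1.ne'
  refine ⟨⟨by positivity, by positivity, by positivity⟩, ?_, ?_, ?_⟩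
  · linear_combination hnucl - hflux
  · linear_combination hflux
  · linear_combination -hgrowth - hnucl

/-- the uniform steady state of the microtubule reaction system
is positive and is a zero of the reaction vector field
f(Mg, Ms, Df) = (−k7·Df·Mg + k5·Df·Ms + k1·Df,
                 k7·Df·Mg − k5·Df·Ms − E,
                 −k3·Df·Mg + C1·Ms − k1·Df + E). -/
theorem microtubule_steady_state
    (k1 k3 k5 k7 C1 E K1 : ℝ)
    (hk1 : 0 < k1) (hk3 : 0 < k3) (hk5 : 0 < k5) (hk7 : 0 < k7)
    (hC1 : 0 < C1) (hE : 0 < E)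
    (hK1 : K1 = C1 * k1 * k7 - k3 * k5 * E) (hK1pos : 0 < K1) :
    (0 < k1 ^ 2 * C1 / K1 ∧ 0 < k1 * k3 * E / K1 ∧ 0 < E / k1) ∧
    (-k7 * (E / k1) * (k1 ^ 2 * C1 / K1) + k5 * (E / k1) * (k1 * k3 * E / K1)
        + k1 * (E / k1) = 0 ∧
     k7 * (E / k1) * (k1 ^ 2 * C1 / K1) - k5 * (E / k1) * (k1 * k3 * E / K1)
        - E = 0 ∧
     -k3 * (E / k1) * (k1 ^ 2 * C1 / K1) + C1 * (k1 * k3 * E / K1)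
        - k1 * (E / k1) + E = 0) :=
  microtubule_steady_state_general k1 k3 k5 k7 C1 E K1 hk1 hk3 hC1 hE hK1 hK1pos
end

section
/- Let k3, k5, k7, C1, d1, d2, d3 be positive reals with K1 = C1·k7 − k3·k5 > 0, K2 = 1 + C1·k3/K1, and assume k5·K2 − C1 > 0. Then for every ρ ≥ 0 the sum of the three principal 2×2 minors of E(ρ) is positive; equivalently, writing the characteristic polynomial of E(ρ) as det(σI − E(ρ)) = σ³ + p2·σ² + p1·σ + p0, one has p1 > 0 (and hence the second elementary symmetric function of the eigenvalues of E(ρ) is positive). -/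
open Matrix

private lemma coeff1_fin_three (a b c d e f g h i : ℝ) :
    (Matrix.charpoly (!![a,b,c;d,e,f;g,h,i] : Matrix (Fin 3) (Fin 3) ℝ)).coeff 1
    = (a*e - b*d) + (a*i - c*g) + (e*i - f*h) := by
  rw [Matrix.charpoly, Matrix.det_fin_three]
  simp [charmatrix_apply, Matrix.one_apply, Polynomial.coeff_sub, Polynomial.coeff_add,
    Polynomial.coeff_mul_C, Polynomial.coeff_C_mul, Polynomial.coeff_X_pow,
    Polynomial.coeff_X, Polynomial.coeff_C, mul_sub, sub_mul]
  ring

/-- under the stability condition k5·K2 − C1 > 0, for every ρ ≥ 0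
the sum of the three principal 2×2 minors of E(ρ) is positive; equivalently the
coefficient p1 of σ in the characteristic polynomial
det(σI − E(ρ)) = σ³ + p2σ² + p1σ + p0 is positive. -/
theorem microtubule_second_symmetric_positive
    (k3 k5 k7 C1 d1 d2 d3 K1 K2 : ℝ)
    (hk3 : 0 < k3) (hk5 : 0 < k5) (hk7 : 0 < k7) (hC1 : 0 < C1)
    (hd1 : 0 < d1) (hd2 : 0 < d2) (hd3 : 0 < d3)
    (hK1 : K1 = C1 * k7 - k3 * k5) (hK1pos : 0 < K1)
    (hK2 : K2 = 1 + C1 * k3 / K1)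
    (hstab : 0 < k5 * K2 - C1) :
    ∀ ρ : ℝ, 0 ≤ ρ →
      (0 < ((-k7 - d1 * ρ) * (-k5 - d2 * ρ) - k5 * k7)
          + ((-k7 - d1 * ρ) * (-K2 - d3 * ρ) - 0 * (-k3))
          + ((-k5 - d2 * ρ) * (-K2 - d3 * ρ) - 1 * C1)) ∧
      (0 < (Matrix.charpoly
          (!![-k7 - d1 * ρ, k5, 0;
              k7, -k5 - d2 * ρ, 1;
              -k3, C1, -K2 - d3 * ρ] : Matrix (Fin 3) (Fin 3) ℝ)).coeff 1) := by
  intro ρ hρ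
  have hK2gt : 1 < K2 := by
    rw [hK2]
    have : 0 < C1 * k3 / K1 := div_pos (mul_pos hC1 hk3) hK1pos
    linarith
  have key : 0 < ((-k7 - d1 * ρ) * (-k5 - d2 * ρ) - k5 * k7)
      + ((-k7 - d1 * ρ) * (-K2 - d3 * ρ) - 0 * (-k3))
      + ((-k5 - d2 * ρ) * (-K2 - d3 * ρ) - 1 * C1) := by
    have hK2pos : 0 < K2 := lt_trans one_pos hK2gt
    nlinarith [mul_nonneg (mul_pos hk7 hd2).le hρ, mul_nonneg (mul_pos hk5 hd1).le hρ,
      mul_nonneg (mul_nonneg (mul_pos hd1 hd2).le hρ) hρ,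
      mul_nonneg (mul_nonneg (mul_pos hd1 hd3).le hρ) hρ,
      mul_nonneg (mul_nonneg (mul_pos hd2 hd3).le hρ) hρ,
      mul_nonneg (mul_pos hk7 hd3).le hρ, mul_nonneg (mul_pos hK2pos hd1).le hρ,
      mul_nonneg (mul_pos hk5 hd3).le hρ, mul_nonneg (mul_pos hK2pos hd2).le hρ,
      mul_pos hk7 hK2pos]
  refine ⟨key, ?_⟩
  rw [coeff1_fin_three]
  linarith [key]
end

section
/- Let k3, k5, k7, C1, d1, d2, d3 be positive reals with K1 = C1·k7 − k3·k5 > 0, K2 = 1 + C1·k3/K1, and assume k5·K2 − C1 > 0. Suppose ρ1 > 0 satisfies det E(ρ1) = 0 (the critical parameter lies on the instability threshold Λ⁰). Then 0 is an eigenvalue of E(ρ1) of algebraic multiplicity exactly one, and the other two eigenvalues of E(ρ1) have strictly negative real parts. -/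
open Matrix Polynomial

lemma charpoly_fin3_aux (a b c d e f g h i : ℂ) :
    (!![a,b,c;d,e,f;g,h,i]).charpoly =
      X^3 - C (a+e+i) * X^2 + C (a*e + a*i + e*i - b*d - c*g - f*h) * X
        - C ((!![a,b,c;d,e,f;g,h,i]).det) := by
  rw [Matrix.charpoly, Matrix.det_fin_three, Matrix.det_fin_three]
  simp [charmatrix_apply_eq, charmatrix_apply_ne, Matrix.charmatrix]
  ring

lemma quad_root_neg_aux (a b : ℝ) (ha : 0 < a) (hb : 0 < b) (σ : ℂ)
    (h : σ^2 + (a:ℂ) * σ + (b:ℂ) = 0) : σ.re < 0 := by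
  have hre := congrArg Complex.re h
  have him := congrArg Complex.im h
  simp [Complex.add_re, Complex.add_im, pow_two, Complex.mul_re, Complex.mul_im] at hre him
  by_contra hx
  push_neg at hx
  have hy : σ.im = 0 := by nlinarith [sq_nonneg σ.im]
  nlinarith [sq_nonneg σ.re]

/-- Exchange of Stability, critical mode: if the parameters
satisfy the stability condition k5·K2 − C1 > 0 and ρ1 > 0 lies on the
instability threshold det E(ρ1) = 0, then 0 is an eigenvalue of E(ρ1) of
algebraic multiplicity exactly one and the other two eigenvalues have
strictly negative real parts. -/
theorem microtubule_exchange_of_stability_critical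
    (k3 k5 k7 C1 d1 d2 d3 K1 K2 ρ1 : ℝ)
    (hk3 : 0 < k3) (hk5 : 0 < k5) (hk7 : 0 < k7) (hC1 : 0 < C1)
    (hd1 : 0 < d1) (hd2 : 0 < d2) (hd3 : 0 < d3)
    (hK1 : K1 = C1 * k7 - k3 * k5) (hK1pos : 0 < K1)
    (hK2 : K2 = 1 + C1 * k3 / K1)
    (hstab : 0 < k5 * K2 - C1)
    (hρ1 : 0 < ρ1)
    (hcrit : (!![-k7 - d1 * ρ1, k5, 0;
                 k7, -k5 - d2 * ρ1, 1;
                 -k3, C1, -K2 - d3 * ρ1] : Matrix (Fin 3) (Fin 3) ℝ).det = 0) :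
    ((Matrix.charpoly
        ((!![-k7 - d1 * ρ1, k5, 0;
             k7, -k5 - d2 * ρ1, 1;
             -k3, C1, -K2 - d3 * ρ1] : Matrix (Fin 3) (Fin 3) ℝ).map
          (algebraMap ℝ ℂ))).roots.count 0 = 1) ∧
    (∀ σ ∈ (Matrix.charpoly
        ((!![-k7 - d1 * ρ1, k5, 0;
             k7, -k5 - d2 * ρ1, 1;
             -k3, C1, -K2 - d3 * ρ1] : Matrix (Fin 3) (Fin 3) ℝ).map
          (algebraMap ℝ ℂ))).roots,
      σ ≠ 0 → σ.re < 0) := by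
  have hK2pos : 0 < K2 := by
    rw [hK2]; positivity
  set a : ℝ := (k7 + d1*ρ1) + (k5 + d2*ρ1) + (K2 + d3*ρ1) with ha_def
  set b : ℝ := ((k7 + d1*ρ1)*(k5 + d2*ρ1) - k5*k7) + (k7 + d1*ρ1)*(K2 + d3*ρ1)
      + ((k5 + d2*ρ1)*(K2 + d3*ρ1) - C1) with hb_def
  have ha : 0 < a := by rw [ha_def]; positivity
  have hb : 0 < b := by
    have h1 : (k7 + d1*ρ1)*(k5 + d2*ρ1) - k5*k7 > 0 := by
      nlinarith [mul_pos hd2 hρ1, mul_pos hd1 hρ1,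
        mul_pos (mul_pos hd1 hρ1) (mul_pos hd2 hρ1)]
    have h2 : (k5 + d2*ρ1)*(K2 + d3*ρ1) - C1 > 0 := by
      nlinarith [mul_pos hd2 hρ1, mul_pos hd3 hρ1,
        mul_pos (mul_pos hd2 hρ1) (mul_pos hd3 hρ1),
        mul_pos (mul_pos hd2 hρ1) hK2pos, mul_pos hk5 (mul_pos hd3 hρ1)]
    have h3 : (k7 + d1*ρ1)*(K2 + d3*ρ1) > 0 := by positivity
    rw [hb_def]; linarith
  -- map of matrix
  have hmap : ((!![-k7 - d1 * ρ1, k5, 0;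
             k7, -k5 - d2 * ρ1, 1;
             -k3, C1, -K2 - d3 * ρ1] : Matrix (Fin 3) (Fin 3) ℝ).map
          (algebraMap ℝ ℂ))
      = !![(-k7 - d1 * ρ1 : ℂ), k5, 0;
           k7, -k5 - d2*ρ1, 1;
           -k3, C1, -K2 - d3*ρ1] := by
    ext i j
    fin_cases i <;> fin_cases j <;> simp
  rw [hmap]
  -- det = 0 in ℂ
  have hdetC : (!![(-k7 - d1 * ρ1 : ℂ), k5, 0;
           k7, -k5 - d2*ρ1, 1;
           -k3, C1, -K2 - d3*ρ1]).det = 0 := by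
    rw [Matrix.det_fin_three] at hcrit ⊢
    simp at hcrit ⊢
    exact_mod_cast hcrit
  have hcp := charpoly_fin3_aux (-k7 - d1 * ρ1 : ℂ) k5 0 k7 (-k5 - d2*ρ1) 1 (-k3) C1 (-K2 - d3*ρ1)
  rw [hdetC] at hcp
  have hcp2 : (!![(-k7 - d1 * ρ1 : ℂ), k5, 0;
           k7, -k5 - d2*ρ1, 1;
           -k3, C1, -K2 - d3*ρ1]).charpoly
      = X * (X^2 + C (a:ℂ) * X + C (b:ℂ)) := by
    rw [hcp, ha_def, hb_def]
    push_cast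
    simp only [Polynomial.C_add, Polynomial.C_sub, Polynomial.C_neg, Polynomial.C_mul, Polynomial.C_1, Polynomial.C_0, Polynomial.C_pow]
    ring
  rw [hcp2]
  set q : ℂ[X] := X^2 + C (a:ℂ) * X + C (b:ℂ) with hq
  have hqeval0 : q.eval 0 ≠ 0 := by
    rw [hq]
    simp
    exact_mod_cast hb.ne'
  have hq0 : q ≠ 0 := fun h => hqeval0 (by rw [h]; simp)
  have hroots : (X * q).roots = 0 ::ₘ q.roots := by
    rw [Polynomial.roots_mul (mul_ne_zero Polynomial.X_ne_zero hq0), Polynomial.roots_X,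
      Multiset.singleton_add]
  constructor
  · rw [hroots, Multiset.count_cons_self]
    have hc0 : q.roots.count 0 = 0 := by
      rw [Polynomial.count_roots, Polynomial.rootMultiplicity_eq_zero_iff]
      intro h; exact absurd h hqeval0
    omega
  · intro σ hσ hσ0
    rw [hroots, Multiset.mem_cons] at hσ
    rcases hσ with h | h
    · exact absurd h hσ0
    · have hiroot := Polynomial.isRoot_of_mem_roots h
      rw [hq] at hiroot
      simp [Polynomial.IsRoot] at hiroot
      apply quad_root_neg_aux a b ha hb σ
      linear_combination hiroot
end

section
/- Let k3, k5, k7, C1, d1, d2, d3 be positive reals with K1 = C1·k7 − k3·k5 > 0, K2 = 1 + C1·k3/K1, and assume k5·K2 − C1 > 0. Suppose ρ1 > 0 satisfies det E(ρ1) = 0. Then for every ρ > ρ1 one has det E(ρ) < 0; moreover for every ρ > ρ1 the matrix E(ρ) has no real eigenvalue in [0, ∞) and has at least one strictly negative real eigenvalue. -/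
open Matrix


lemma aux_cubic_pos (c2 c1 c0 σ : ℝ) (h2 : 0 < c2) (h1 : 0 < c1) (h0 : 0 < c0)
    (hσ : 0 ≤ σ) : 0 < σ ^ 3 + c2 * σ ^ 2 + c1 * σ + c0 := by
  have ha : 0 ≤ σ ^ 3 := by positivity
  have hb : 0 ≤ c2 * σ ^ 2 := by positivity
  have hc : 0 ≤ c1 * σ := by positivity
  linarith

lemma aux_cubic_neg_root (c2 c1 c0 : ℝ) (h2 : 0 < c2) (h1 : 0 < c1) (h0 : 0 < c0) :
    ∃ σ : ℝ, σ < 0 ∧ σ ^ 3 + c2 * σ ^ 2 + c1 * σ + c0 = 0 := by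
  set M : ℝ := c2 + c0 + 1 with hM
  have hM1 : (1 : ℝ) ≤ M := by linarith
  have hfM : (-M) ^ 3 + c2 * (-M) ^ 2 + c1 * (-M) + c0 < 0 := by
    have hMc2 : M - c2 = c0 + 1 := by rw [hM]; ring
    nlinarith [sq_nonneg M, mul_pos h1 (lt_of_lt_of_le one_pos hM1)]
  have hcont : ContinuousOn (fun σ : ℝ => σ ^ 3 + c2 * σ ^ 2 + c1 * σ + c0)
      (Set.Icc (-M) 0) := by fun_prop
  have hab : (-M : ℝ) ≤ 0 := by linarith
  have hmem : (0 : ℝ) ∈ Set.Icc ((-M) ^ 3 + c2 * (-M) ^ 2 + c1 * (-M) + c0)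
      ((0:ℝ) ^ 3 + c2 * 0 ^ 2 + c1 * 0 + c0) := by
    constructor
    · linarith
    · simp; linarith
  obtain ⟨σ, hσmem, hσeq⟩ := intermediate_value_Icc hab hcont hmem
  refine ⟨σ, ?_, hσeq⟩
  rcases lt_or_eq_of_le hσmem.2 with h | h
  · exact h
  · exfalso; rw [h] at hσeq; simp at hσeq; nlinarith

set_option maxHeartbeats 1600000

/-- Exchange of Stability, higher modes: under the stability
condition k5·K2 − C1 > 0, if det E(ρ1) = 0 at some ρ1 > 0, then for every
ρ > ρ1 one has det E(ρ) < 0, E(ρ) has no real eigenvalue in [0, ∞), and E(ρ)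
has at least one strictly negative real eigenvalue. -/
theorem microtubule_exchange_of_stability_higher_modes
    (k3 k5 k7 C1 d1 d2 d3 K1 K2 ρ1 : ℝ)
    (hk3 : 0 < k3) (hk5 : 0 < k5) (hk7 : 0 < k7) (hC1 : 0 < C1)
    (hd1 : 0 < d1) (hd2 : 0 < d2) (hd3 : 0 < d3)
    (hK1 : K1 = C1 * k7 - k3 * k5) (hK1pos : 0 < K1)
    (hK2 : K2 = 1 + C1 * k3 / K1)
    (hstab : 0 < k5 * K2 - C1)
    (hρ1 : 0 < ρ1)
    (hcrit : (!![-k7 - d1 * ρ1, k5, 0;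
                 k7, -k5 - d2 * ρ1, 1;
                 -k3, C1, -K2 - d3 * ρ1] : Matrix (Fin 3) (Fin 3) ℝ).det = 0) :
    ∀ ρ : ℝ, ρ1 < ρ →
      ((!![-k7 - d1 * ρ, k5, 0;
           k7, -k5 - d2 * ρ, 1;
           -k3, C1, -K2 - d3 * ρ] : Matrix (Fin 3) (Fin 3) ℝ).det < 0) ∧
      (∀ σ : ℝ, 0 ≤ σ →
        ((!![-k7 - d1 * ρ, k5, 0;
             k7, -k5 - d2 * ρ, 1;
             -k3, C1, -K2 - d3 * ρ] : Matrix (Fin 3) (Fin 3) ℝ)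
          - σ • (1 : Matrix (Fin 3) (Fin 3) ℝ)).det ≠ 0) ∧
      (∃ σ : ℝ, σ < 0 ∧
        ((!![-k7 - d1 * ρ, k5, 0;
             k7, -k5 - d2 * ρ, 1;
             -k3, C1, -K2 - d3 * ρ] : Matrix (Fin 3) (Fin 3) ℝ)
          - σ • (1 : Matrix (Fin 3) (Fin 3) ℝ)).det = 0) := by
  intro ρ hρ
  have hK2pos : 0 < K2 := by rw [hK2]; positivity
  have hρpos : 0 < ρ := hρ1.trans hρ
  have hd : ∀ r : ℝ, (!![-k7 - d1 * r, k5, 0;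
           k7, -k5 - d2 * r, 1;
           -k3, C1, -K2 - d3 * r] : Matrix (Fin 3) (Fin 3) ℝ).det =
      (C1 * k7 - k3 * k5) - (k7 * d2 * K2 + d1 * (k5 * K2 - C1)) * r
        - (k7 * d2 * d3 + d1 * (k5 * d3 + d2 * K2)) * r ^ 2 - d1 * d2 * d3 * r ^ 3 := by
    intro r
    simp [Matrix.det_fin_three]
    ring
  have hA : 0 < k7 * d2 * K2 + d1 * (k5 * K2 - C1) := by positivity
  have hB : 0 < k7 * d2 * d3 + d1 * (k5 * d3 + d2 * K2) := by positivity
  have hC : 0 < d1 * d2 * d3 := by positivity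
  rw [hd ρ1] at hcrit
  have h2 : ρ1 ^ 2 < ρ ^ 2 := by nlinarith
  have h3 : ρ1 ^ 3 < ρ ^ 3 := by nlinarith
  have hdetneg : (!![-k7 - d1 * ρ, k5, 0;
           k7, -k5 - d2 * ρ, 1;
           -k3, C1, -K2 - d3 * ρ] : Matrix (Fin 3) (Fin 3) ℝ).det < 0 := by
    rw [hd ρ]
    nlinarith [mul_lt_mul_of_pos_left hρ hA, mul_lt_mul_of_pos_left h2 hB,
      mul_lt_mul_of_pos_left h3 hC]
  have hp : ∀ σ : ℝ, ((!![-k7 - d1 * ρ, k5, 0;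
             k7, -k5 - d2 * ρ, 1;
             -k3, C1, -K2 - d3 * ρ] : Matrix (Fin 3) (Fin 3) ℝ)
          - σ • (1 : Matrix (Fin 3) (Fin 3) ℝ)).det
        = -(σ ^ 3 + ((k7 + d1 * ρ) + (k5 + d2 * ρ) + (K2 + d3 * ρ)) * σ ^ 2
            + ((k7 + d1 * ρ) * (k5 + d2 * ρ) + (k5 + d2 * ρ) * (K2 + d3 * ρ)
                + (k7 + d1 * ρ) * (K2 + d3 * ρ) - C1 - k5 * k7) * σ
            + ((k7 + d1 * ρ) * (k5 + d2 * ρ) * (K2 + d3 * ρ) - (k7 + d1 * ρ) * C1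
                - k5 * k7 * (K2 + d3 * ρ) + k3 * k5)) := by
    intro σ
    simp [Matrix.det_fin_three, Matrix.sub_apply, Matrix.smul_apply, Matrix.one_apply]
    ring
  have hc2pos : 0 < (k7 + d1 * ρ) + (k5 + d2 * ρ) + (K2 + d3 * ρ) := by positivity
  have hc1pos : 0 < (k7 + d1 * ρ) * (k5 + d2 * ρ) + (k5 + d2 * ρ) * (K2 + d3 * ρ)
      + (k7 + d1 * ρ) * (K2 + d3 * ρ) - C1 - k5 * k7 := by
    have hvw : C1 < (k5 + d2 * ρ) * (K2 + d3 * ρ) := by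
      nlinarith [mul_pos hd2 hρpos, mul_pos hd3 hρpos,
        mul_pos (mul_pos hd2 hρpos) (mul_pos hd3 hρpos),
        mul_pos hk5 (mul_pos hd3 hρpos), mul_pos hK2pos (mul_pos hd2 hρpos)]
    have huv : k5 * k7 < (k7 + d1 * ρ) * (k5 + d2 * ρ) := by
      nlinarith [mul_pos hd1 hρpos, mul_pos hd2 hρpos,
        mul_pos (mul_pos hd1 hρpos) (mul_pos hd2 hρpos),
        mul_pos hk7 (mul_pos hd2 hρpos), mul_pos hk5 (mul_pos hd1 hρpos)]
    have huw : 0 < (k7 + d1 * ρ) * (K2 + d3 * ρ) := by positivity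
    linarith
  have hc0pos : 0 < (k7 + d1 * ρ) * (k5 + d2 * ρ) * (K2 + d3 * ρ) - (k7 + d1 * ρ) * C1
      - k5 * k7 * (K2 + d3 * ρ) + k3 * k5 := by
    have hdn := hdetneg
    rw [hd ρ] at hdn
    have hid : (k7 + d1 * ρ) * (k5 + d2 * ρ) * (K2 + d3 * ρ) - (k7 + d1 * ρ) * C1
        - k5 * k7 * (K2 + d3 * ρ) + k3 * k5
        = -((C1 * k7 - k3 * k5) - (k7 * d2 * K2 + d1 * (k5 * K2 - C1)) * ρ
          - (k7 * d2 * d3 + d1 * (k5 * d3 + d2 * K2)) * ρ ^ 2 - d1 * d2 * d3 * ρ ^ 3) := by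
      ring
    rw [hid]
    linarith
  refine ⟨hdetneg, ?_, ?_⟩
  · intro σ hσ
    rw [hp σ]
    have := aux_cubic_pos _ _ _ σ hc2pos hc1pos hc0pos hσ
    intro hcontra
    rw [neg_eq_zero] at hcontra
    linarith [hcontra ▸ this]
  · obtain ⟨σ, hσneg, hσeq⟩ := aux_cubic_neg_root _ _ _ hc2pos hc1pos hc0pos
    exact ⟨σ, hσneg, by rw [hp σ, hσeq]; ring⟩
end

section
/- Let k3, k5, k7, C1, d1, d2, d3 be positive reals with K1 = C1·k7 − k3·k5 > 0 and K2 = 1 + C1·k3/K1, let ρ ≥ 0, and let σ ∈ ℂ be an eigenvalue of E(ρ). Then the vector ω = (k5, d1·ρ + k7 + σ, (d1·ρ + k7 + σ)·(d2·ρ + k5 + σ) − k5·k7) ∈ ℂ³ is nonzero and satisfies E(ρ)·ω = σ·ω; i.e. ω is an eigenvector of E(ρ) for the eigenvalue σ. -/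
open Matrix

/-- for any eigenvalue σ of E(ρ), the explicit vector
ω = (k5, d1·ρ + k7 + σ, (d1·ρ + k7 + σ)·(d2·ρ + k5 + σ) − k5·k7)
is a (nonzero) eigenvector of E(ρ) for σ. -/
theorem microtubule_eigenvector_formula
    (k3 k5 k7 C1 d1 d2 d3 K1 K2 : ℝ)
    (hk3 : 0 < k3) (hk5 : 0 < k5) (hk7 : 0 < k7) (hC1 : 0 < C1)
    (hd1 : 0 < d1) (hd2 : 0 < d2) (hd3 : 0 < d3)
    (hK1 : K1 = C1 * k7 - k3 * k5) (hK1pos : 0 < K1)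
    (hK2 : K2 = 1 + C1 * k3 / K1)
    (ρ : ℝ) (hρ : 0 ≤ ρ) (σ : ℂ)
    (heig : (((!![-k7 - d1 * ρ, k5, 0;
                  k7, -k5 - d2 * ρ, 1;
                  -k3, C1, -K2 - d3 * ρ] : Matrix (Fin 3) (Fin 3) ℝ).map
                (algebraMap ℝ ℂ))
              - σ • (1 : Matrix (Fin 3) (Fin 3) ℂ)).det = 0) :
    (![(k5 : ℂ),
       (d1 : ℂ) * ρ + k7 + σ,
       ((d1 : ℂ) * ρ + k7 + σ) * ((d2 : ℂ) * ρ + k5 + σ) - k5 * k7]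
      ≠ (0 : Fin 3 → ℂ)) ∧
    (((!![-k7 - d1 * ρ, k5, 0;
          k7, -k5 - d2 * ρ, 1;
          -k3, C1, -K2 - d3 * ρ] : Matrix (Fin 3) (Fin 3) ℝ).map
        (algebraMap ℝ ℂ)).mulVec
      ![(k5 : ℂ),
        (d1 : ℂ) * ρ + k7 + σ,
        ((d1 : ℂ) * ρ + k7 + σ) * ((d2 : ℂ) * ρ + k5 + σ) - k5 * k7]
      = σ • ![(k5 : ℂ),
              (d1 : ℂ) * ρ + k7 + σ,
              ((d1 : ℂ) * ρ + k7 + σ) * ((d2 : ℂ) * ρ + k5 + σ) - k5 * k7]) := by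
  have hk5' : (k5:ℂ) ≠ 0 := by exact_mod_cast hk5.ne'
  simp [Matrix.det_fin_three, Matrix.map_apply, Matrix.one_apply, smul_eq_mul] at heig
  push_cast at heig
  refine ⟨fun h => hk5' (congrFun h 0), ?_⟩
  funext i
  fin_cases i <;>
    simp [Matrix.mulVec, dotProduct, Fin.sum_univ_three, Matrix.map_apply] <;>
    push_cast <;> try ring
  linear_combination heig
end

section
/- Let k3, k5, k7, C1, d1, d2, d3 be positive reals with K1 = C1·k7 − k3·k5 > 0 and K2 = 1 + C1·k3/K1, let ρ ≥ 0, and let σ ∈ ℂ be an eigenvalue of E(ρ). Then the vector ω* = (C1·k7 − (d2·ρ + k5 + σ)·k3, (d1·ρ + k7 + σ)·C1 − k3·k5, (d2·ρ + k5 + σ)·(d1·ρ + k7 + σ) − k5·k7) ∈ ℂ³ satisfies E(ρ)ᵀ·ω* = σ·ω*; i.e. ω* is an eigenvector of the transposed (adjoint) matrix E(ρ)ᵀ for the same eigenvalue σ. -/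
open Matrix

/-- for any eigenvalue σ of E(ρ), the explicit vector
ω* = (C1·k7 − (d2·ρ + k5 + σ)·k3, (d1·ρ + k7 + σ)·C1 − k3·k5,
      (d2·ρ + k5 + σ)·(d1·ρ + k7 + σ) − k5·k7)
is an eigenvector of the transposed matrix E(ρ)ᵀ for the same eigenvalue σ. -/
theorem microtubule_adjoint_eigenvector_formula
    (k3 k5 k7 C1 d1 d2 d3 K1 K2 : ℝ)
    (hk3 : 0 < k3) (hk5 : 0 < k5) (hk7 : 0 < k7) (hC1 : 0 < C1)
    (hd1 : 0 < d1) (hd2 : 0 < d2) (hd3 : 0 < d3)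
    (hK1 : K1 = C1 * k7 - k3 * k5) (hK1pos : 0 < K1)
    (hK2 : K2 = 1 + C1 * k3 / K1)
    (ρ : ℝ) (hρ : 0 ≤ ρ) (σ : ℂ)
    (heig : (((!![-k7 - d1 * ρ, k5, 0;
                  k7, -k5 - d2 * ρ, 1;
                  -k3, C1, -K2 - d3 * ρ] : Matrix (Fin 3) (Fin 3) ℝ).map
                (algebraMap ℝ ℂ))
              - σ • (1 : Matrix (Fin 3) (Fin 3) ℂ)).det = 0) :
    (((!![-k7 - d1 * ρ, k5, 0;
          k7, -k5 - d2 * ρ, 1;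
          -k3, C1, -K2 - d3 * ρ] : Matrix (Fin 3) (Fin 3) ℝ).map
        (algebraMap ℝ ℂ))ᵀ.mulVec
      ![(C1 : ℂ) * k7 - ((d2 : ℂ) * ρ + k5 + σ) * k3,
        ((d1 : ℂ) * ρ + k7 + σ) * C1 - k3 * k5,
        ((d2 : ℂ) * ρ + k5 + σ) * ((d1 : ℂ) * ρ + k7 + σ) - k5 * k7]
      = σ • ![(C1 : ℂ) * k7 - ((d2 : ℂ) * ρ + k5 + σ) * k3,
              ((d1 : ℂ) * ρ + k7 + σ) * C1 - k3 * k5,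
              ((d2 : ℂ) * ρ + k5 + σ) * ((d1 : ℂ) * ρ + k7 + σ) - k5 * k7]) := by
  simp [det_fin_three, Matrix.map_apply, Matrix.smul_apply, Matrix.one_apply] at heig
  funext i
  fin_cases i <;>
    simp [mulVec, dotProduct, Matrix.map_apply, Fin.sum_univ_three] <;>
    push_cast at heig ⊢ <;>
    ring_nf <;> ring_nf at heig <;> linear_combination heig
end
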